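/- arXiv:2108.12692 — 6 statements merged into one kernel-verified Lean document; each statement's English description precedes it below -/
import Mathlib

section
/- Let p, q, r be natural numbers and let M be a (p+q)×(r+q) complex matrix in block form M = [[A, B], [C, D]] where A is p×r, B is p×q, C is q×r, and D is an invertible q×q matrix. Let M/D := A − B·D⁻¹·C. Then there exists a linear isomorphism φ : ℂ^p / range(M/D) ≅ ℂ^{p+q} / range(M) (where range denotes the range of the linear map given by matrix-vector multiplication) such that for every i ∈ {1,…,p}, φ sends the class of the i-th standard basis vector of ℂ^p to the class of the i-th standard basis vector of ℂ^{p+q} (i.e. the basis vector indexed by the first block of rows). -/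
/-!
Eliminating the second block of unknowns shows that `(x, y)` lies in the range of
`M = [[A, B], [C, D]]` iff `x - B D⁻¹ y` lies in the range of `M/D`. Hence `x ↦ [(x, 0)]`
maps `ℂ^p` onto `coker M`, with kernel exactly the range of `M/D`.
-/

open Submodule LinearMap

namespace Matrix

variable {R m n o : Type*} [CommRing R] [Fintype n] [Fintype o] [DecidableEq o]
  (A : Matrix m n R) (B : Matrix m o R) (C : Matrix o n R) {D : Matrix o o R}

theorem fromBlocks_mulVec_sum_elim (hD : IsUnit D.det) (u : n → R) (y : o → R) :
    fromBlocks A B C D *ᵥ Sum.elim u (D⁻¹ *ᵥ (y - C *ᵥ u)) =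
      Sum.elim ((A - B * D⁻¹ * C) *ᵥ u + (B * D⁻¹) *ᵥ y) y := by
  have hDDinv : D *ᵥ (D⁻¹ *ᵥ (y - C *ᵥ u)) = y - C *ᵥ u := by
    rw [mulVec_mulVec, mul_nonsing_inv D hD, one_mulVec]
  rw [fromBlocks_mulVec, Sum.elim_comp_inl, Sum.elim_comp_inr, hDDinv, add_sub_cancel]
  congr 1
  simp only [sub_mulVec, mulVec_sub, mulVec_mulVec, Matrix.mul_assoc]
  abel

theorem sum_elim_mem_range_fromBlocks_iff (hD : IsUnit D.det) (x : m → R) (y : o → R) :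
    Sum.elim x y ∈ range (fromBlocks A B C D).mulVecLin ↔
      x - (B * D⁻¹) *ᵥ y ∈ range (A - B * D⁻¹ * C).mulVecLin := by
  constructor
  · rintro ⟨w, hw⟩
    have hw_inr : C *ᵥ (w ∘ Sum.inl) + D *ᵥ (w ∘ Sum.inr) = y := by
      simpa [fromBlocks_mulVec] using congrArg (· ∘ Sum.inr) hw
    have hw_eq : w = Sum.elim (w ∘ Sum.inl) (D⁻¹ *ᵥ (y - C *ᵥ (w ∘ Sum.inl))) := by
      rw [← hw_inr, add_sub_cancel_left, mulVec_mulVec, nonsing_inv_mul D hD, one_mulVec,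
        Sum.elim_comp_inl_inr]
    rw [mulVecLin_apply, hw_eq, fromBlocks_mulVec_sum_elim A B C hD] at hw
    exact ⟨w ∘ Sum.inl, eq_sub_of_add_eq (congrArg (· ∘ Sum.inl) hw)⟩
  · rintro ⟨u, hu⟩
    refine ⟨Sum.elim u (D⁻¹ *ᵥ (y - C *ᵥ u)), ?_⟩
    rw [mulVecLin_apply] at hu
    rw [mulVecLin_apply, fromBlocks_mulVec_sum_elim A B C hD, hu, sub_add_cancel]

theorem exists_quotEquiv_range_fromBlocks (hD : IsUnit D.det) :
    ∃ φ : ((m → R) ⧸ range (A - B * D⁻¹ * C).mulVecLin) ≃ₗ[R]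
        ((m ⊕ o → R) ⧸ range (fromBlocks A B C D).mulVecLin),
      ∀ x, φ (Submodule.Quotient.mk x) = Submodule.Quotient.mk (Sum.elim x 0) := by
  let g : (m → R) →ₗ[R] (m ⊕ o → R) ⧸ range (fromBlocks A B C D).mulVecLin :=
    (range _).mkQ ∘ₗ (LinearEquiv.sumArrowLequivProdArrow m o R R).symm.toLinearMap ∘ₗ
      LinearMap.inl R _ _
  have hg : ∀ x, g x = Submodule.Quotient.mk (Sum.elim x 0) := fun x => rfl
  have hker : ker g = range (A - B * D⁻¹ * C).mulVecLin := by
    ext x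
    rw [mem_ker, hg, Submodule.Quotient.mk_eq_zero, sum_elim_mem_range_fromBlocks_iff A B C hD,
      mulVec_zero, sub_zero]
  have hsurj : Function.Surjective g := by
    intro c
    obtain ⟨w, rfl⟩ := Submodule.Quotient.mk_surjective _ c
    obtain ⟨x, y, rfl⟩ : ∃ x y, w = Sum.elim x y := ⟨_, _, (Sum.elim_comp_inl_inr w).symm⟩
    refine ⟨x - (B * D⁻¹) *ᵥ y, ?_⟩
    rw [hg, Submodule.Quotient.eq, ← Sum.elim_sub_sub, sum_elim_mem_range_fromBlocks_iff A B C hD,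
      zero_sub, mulVec_neg, sub_sub_cancel_left, sub_neg_eq_add, neg_add_cancel]
    exact zero_mem _
  exact ⟨(quotEquivOfEq _ _ hker.symm).trans (g.quotKerEquivOfSurjective hsurj),
    fun x => by simp [hg]⟩

end Matrix

/-- **Cokernel and the Schur complement.** For a `(p+q) × (r+q)` block matrix
`M = [[A, B], [C, D]]` with `D` invertible, the cokernel of the Schur complement
`M/D = A - B * D⁻¹ * C` is isomorphic to the cokernel of `M`, and under this
identification the class of the `i`-th standard basis vector of `ℂ^p` is sent to
the class of the `i`-th standard basis vector (in the first block of rows) of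
`ℂ^{p+q}`. -/
theorem coker_schur_complement (p q r : ℕ)
    (A : Matrix (Fin p) (Fin r) ℂ) (B : Matrix (Fin p) (Fin q) ℂ)
    (C : Matrix (Fin q) (Fin r) ℂ) (D : Matrix (Fin q) (Fin q) ℂ)
    (hD : IsUnit D.det) :
    ∃ φ : ((Fin p → ℂ) ⧸ LinearMap.range (Matrix.mulVecLin (A - B * D⁻¹ * C))) ≃ₗ[ℂ]
        ((Fin p ⊕ Fin q → ℂ) ⧸
          LinearMap.range (Matrix.mulVecLin (Matrix.fromBlocks A B C D))),
      ∀ i : Fin p,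
        φ (Submodule.Quotient.mk (Pi.single i 1)) =
          Submodule.Quotient.mk (Pi.single (Sum.inl i) 1) := by
  obtain ⟨φ, hφ⟩ := Matrix.exists_quotEquiv_range_fromBlocks A B C hD
  exact ⟨φ, fun i => by rw [hφ, Sum.elim_single_zero]⟩
end

section
/- Let p, q, r be natural numbers and let M = [[A, B], [C, D]] be a complex block matrix with A of size p×r, B of size p×q, C of size q×r, and D an invertible q×q matrix. Then for every row index j ∈ {1,…,p} and column index i ∈ {1,…,r}, the (j,i) entry of the Schur complement A − B·D⁻¹·C equals det(N)/det(D), where N is the (1+q)×(1+q) matrix in block form [[A_{j,i}, B_j], [C^i, D]], with A_{j,i} the scalar (j,i) entry of A, B_j the j-th row of B, and C^i the i-th column of C. -/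
open Matrix

theorem Matrix.sub_mul_inv_mul_apply_eq_det_fromBlocks_div {K l m n : Type*} [Field K]
    [Fintype n] [DecidableEq n] (A : Matrix l m K) (B : Matrix l n K) (C : Matrix n m K)
    (D : Matrix n n K) (hD : IsUnit D.det) (j : l) (i : m) :
    (A - B * D⁻¹ * C) j i =
      (fromBlocks (of fun (_ : Unit) (_ : Unit) => A j i) (of fun (_ : Unit) k => B j k)
        (of fun k (_ : Unit) => C k i) D).det / D.det := by
  have : Invertible D := D.invertibleOfIsUnitDet hD
  rw [det_fromBlocks₂₂, invOf_eq_nonsing_inv, mul_div_cancel_left₀ _ hD.ne_zero, det_unique]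
  simp [Matrix.mul_apply]

/-- **Entries of the Schur complement as ratios of minors.** For a block matrix
`M = [[A, B], [C, D]]` with `D` invertible, the `(j, i)` entry of the Schur
complement `A - B * D⁻¹ * C` equals `det N / det D`, where
`N = [[A j i, (j-th row of B)], [(i-th column of C), D]]`. -/
theorem schur_complement_entry (p q r : ℕ)
    (A : Matrix (Fin p) (Fin r) ℂ) (B : Matrix (Fin p) (Fin q) ℂ)
    (C : Matrix (Fin q) (Fin r) ℂ) (D : Matrix (Fin q) (Fin q) ℂ)
    (hD : IsUnit D.det) (j : Fin p) (i : Fin r) :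
    (A - B * D⁻¹ * C) j i =
      (Matrix.fromBlocks
        (Matrix.of fun (_ : Unit) (_ : Unit) => A j i)
        (Matrix.of fun (_ : Unit) (k : Fin q) => B j k)
        (Matrix.of fun (k : Fin q) (_ : Unit) => C k i)
        D).det / D.det :=
  Matrix.sub_mul_inv_mul_apply_eq_det_fromBlocks_div A B C D hD j i
end

section
/- Let n and m be natural numbers, let K₁ be an n×n, K₂ an n×m, K₃ an m×n complex matrix, let K₄ be an invertible m×m complex matrix, and let z ∈ ℂ. Consider the (2n+m)×(2n+m) complex matrix K(z) with 3×3 block structure (block rows of sizes n, n, m and block columns of sizes n, m, n): first block row (I_n, 0, −I_n), second block row (K₁, K₂, z·I_n), third block row (K₃, K₄, 0). Then det(K(z)) = det(K₄) · det(z·I_n + Π), where Π := K₁ − K₂·K₄⁻¹·K₃. -/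
/-!
Reordering the block columns to `(n, n, m)` turns the first block row into `(I, -I, 0)`.
Taking the Schur complement of that identity block adds the first block column to the second,
leaving `[[z • I + K₁, K₂], [K₃, K₄]]`, whose Schur complement with respect to `K₄` is `z • I + Π`.
-/

namespace Matrix

variable {l m n p q₁ q₂ α R : Type*}

theorem fromBlocks_fromCols_submatrix_sumCongr_sumComm (A : Matrix p l α)
    (B₁ : Matrix p m α) (B₂ : Matrix p n α) (C : Matrix (q₁ ⊕ q₂) l α)
    (D₁ : Matrix q₁ m α) (D₂ : Matrix q₁ n α) (D₃ : Matrix q₂ m α) (D₄ : Matrix q₂ n α) :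
    (fromBlocks A (fromCols B₁ B₂) C (fromBlocks D₁ D₂ D₃ D₄)).submatrix id
        (Equiv.sumCongr (Equiv.refl l) (Equiv.sumComm n m)) =
      fromBlocks A (fromCols B₂ B₁) C (fromBlocks D₂ D₁ D₄ D₃) := by
  ext i j
  rcases i with i | i | i <;> rcases j with j | j | j <;> rfl

variable [Fintype m] [Fintype n] [DecidableEq m] [DecidableEq n] [CommRing R]

theorem det_fromBlocks_one_fromCols_neg_one_zero (P S : Matrix n n R) (Q U : Matrix m n R)
    (T : Matrix n m R) (V : Matrix m m R) :
    (fromBlocks 1 (fromCols (-1) 0) (fromRows P Q) (fromBlocks S T U V)).det =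
      (fromBlocks (S + P) T (U + Q) V).det := by
  rw [det_fromBlocks_one₁₁, fromRows_mul_fromCols]
  simp only [Matrix.mul_neg, Matrix.mul_one, Matrix.mul_zero, sub_eq_add_neg, fromBlocks_neg,
    fromBlocks_add, neg_neg, neg_zero, add_zero]

theorem det_fromBlocks_of_isUnit_det₂₂ (A : Matrix n n R) (B : Matrix n m R) (C : Matrix m n R)
    (D : Matrix m m R) (hD : IsUnit D.det) :
    (fromBlocks A B C D).det = D.det * (A - B * D⁻¹ * C).det := by
  have := D.invertibleOfIsUnitDet hD
  rw [det_fromBlocks₂₂, invOf_eq_nonsing_inv]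

end Matrix

/-- **Dimer characteristic polynomial via the boundary matrix** (linear algebra
content of Theorem 4.5). For the `(2n+m) × (2n+m)` matrix `K(z)` with block rows
of sizes `n, n, m` and block columns of sizes `n, m, n` given by
`[[I, 0, -I], [K₁, K₂, zI], [K₃, K₄, 0]]`, with `K₄` invertible, one has
`det K(z) = det K₄ * det (z • I + Π)` where `Π = K₁ - K₂ * K₄⁻¹ * K₃`. -/
theorem det_dimer_characteristic (n m : ℕ)
    (K₁ : Matrix (Fin n) (Fin n) ℂ) (K₂ : Matrix (Fin n) (Fin m) ℂ)
    (K₃ : Matrix (Fin m) (Fin n) ℂ) (K₄ : Matrix (Fin m) (Fin m) ℂ)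
    (hK₄ : IsUnit K₄.det) (z : ℂ) :
    ((Matrix.fromBlocks
        (1 : Matrix (Fin n) (Fin n) ℂ)
        (Matrix.fromCols (0 : Matrix (Fin n) (Fin m) ℂ)
          (-1 : Matrix (Fin n) (Fin n) ℂ))
        (Matrix.fromRows K₁ K₃)
        (Matrix.fromBlocks K₂ (z • (1 : Matrix (Fin n) (Fin n) ℂ)) K₄ 0)).submatrix
        id
        (Equiv.sumCongr (Equiv.refl (Fin n)) (Equiv.sumComm (Fin n) (Fin m)))).det =
      K₄.det *
        (z • (1 : Matrix (Fin n) (Fin n) ℂ) + (K₁ - K₂ * K₄⁻¹ * K₃)).det := by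
  rw [Matrix.fromBlocks_fromCols_submatrix_sumCongr_sumComm,
    Matrix.det_fromBlocks_one_fromCols_neg_one_zero,
    Matrix.det_fromBlocks_of_isUnit_det₂₂ _ _ _ _ hK₄, zero_add, add_sub_assoc]
end

section
/- Let n ≥ 1 and let c₁,…,cₙ be nonzero complex numbers. Let M be the ordered product of 2×2 matrices M = [[0, c₁], [−1, 1]] · [[0, c₂], [−1, 1]] ⋯ [[0, cₙ], [−1, 1]]. Then (tr M)² / det(M) = (1/(c₁c₂⋯cₙ)) · ( Σ_{k=0}^{⌊n/2⌋} (−1)^k F_k(c) )², where F_k(c) = Σ_{I cyclically sparse, |I|=k} ∏_{i∈I} c_i. -/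
/-- A subset `I` of `ℤ/nℤ` is cyclically sparse if it contains no pair of
cyclically consecutive indices `i, i+1`. -/
def CyclicallySparse {n : ℕ} (I : Finset (ZMod n)) : Prop :=
  ∀ i ∈ I, i + 1 ∉ I

instance {n : ℕ} (I : Finset (ZMod n)) : Decidable (CyclicallySparse I) := by
  unfold CyclicallySparse; infer_instance

/-- `F k c = Σ_{I cyclically sparse, |I| = k} ∏_{i ∈ I} c i`. -/
noncomputable def sparseSum (n : ℕ) [NeZero n] (c : ZMod n → ℂ) (k : ℕ) : ℂ :=
  ∑ I ∈ Finset.univ.filter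
      (fun I : Finset (ZMod n) => CyclicallySparse I ∧ I.card = k),
    ∏ i ∈ I, c i

/-!
Expand the trace of `M = A₀ ⋯ Aₙ₋₁`, `Aᵢ = [[0, cᵢ], [-1, 1]]`, as a sum over closed paths
`s : ℤ/nℤ → {0, 1}` of `∏ᵢ Aᵢ (s i) (s (i + 1))`. Since `Aᵢ 0 0 = 0`, only paths whose zero
set `I` is cyclically sparse contribute; such a path picks up `cᵢ` on each step `0 → 1`, i.e.
for `i ∈ I`, and `-1` on each step `1 → 0`, of which there are `#I`. Hence
`tr M = Σ_{I sparse} (-1)^{#I} ∏_{i ∈ I} cᵢ`, while `det M = ∏ᵢ cᵢ`.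
-/

open Finset

theorem Fin.snoc_self_zero_succ {α : Type*} {n : ℕ} (s : Fin (n + 1) → α) (i : Fin (n + 1)) :
    Fin.snoc (α := fun _ => α) s (s 0) i.succ = s (i + 1) := by
  induction i using Fin.lastCases with
  | last => simp
  | cast j => rw [Fin.succ_castSucc, Fin.snoc_castSucc, Fin.coeSucc_eq_succ]

namespace Matrix

variable {m R : Type*} [Fintype m] [DecidableEq m] [CommSemiring R]

theorem list_ofFn_prod_apply {n : ℕ} (A : Fin n → Matrix m m R) (a b : m) :
    (List.ofFn A).prod a b =
      ∑ t : Fin (n + 1) → m with t 0 = a ∧ t (Fin.last n) = b,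
        ∏ i : Fin n, A i (t i.castSucc) (t i.succ) := by
  induction n generalizing a with
  | zero =>
    rw [sum_filter, ← (Equiv.funUnique (Fin 1) m).symm.sum_comp]
    simp [one_apply, ite_and]
  | succ n ih =>
    rw [List.ofFn_succ, List.prod_cons, mul_apply]
    simp_rw [ih, mul_sum]
    rw [sum_comm' (t' := {t : Fin (n + 1) → m | t (Fin.last n) = b}) (s' := fun t => {t 0})
      (by intro k t; simp only [mem_univ, mem_filter, mem_singleton, true_and]; grind)]
    symm
    apply sum_nbij' Fin.tail (Fin.cons a)
    · intro t ht
      simp only [mem_filter, mem_univ, true_and] at ht ⊢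
      exact ht.2
    · intro t ht
      simp_all
    · intro t ht
      simp only [mem_filter, mem_univ, true_and] at ht
      rw [← ht.1, Fin.cons_self_tail]
    · intro t _
      simp
    · intro t ht
      simp only [mem_filter, mem_univ, true_and] at ht
      simp [Fin.prod_univ_succ, ← ht.1, Fin.tail]

theorem trace_list_ofFn_prod {n : ℕ} (A : Fin (n + 1) → Matrix m m R) :
    trace (List.ofFn A).prod = ∑ s : Fin (n + 1) → m, ∏ i, A i (s i) (s (i + 1)) := by
  simp_rw [trace, diag, list_ofFn_prod_apply]
  rw [sum_comm' (t' := {t : Fin (n + 2) → m | t (Fin.last _) = t 0}) (s' := fun t => {t 0})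
    (by intro a t; simp only [mem_univ, mem_filter, mem_singleton, true_and]; grind)]
  simp only [sum_singleton]
  symm
  apply sum_nbij' (fun s => Fin.snoc (α := fun _ => m) s (s 0)) Fin.init
  · simp
  · simp
  · intro s _
    simp
  · intro t ht
    simp only [mem_filter, mem_univ, true_and] at ht
    conv_rhs => rw [← Fin.snoc_init_self t, ht]
    simp [Fin.init]
  · intro s _
    simp [Fin.snoc_self_zero_succ]

end Matrix

theorem CyclicallySparse.two_mul_card_le {n : ℕ} [NeZero n] {I : Finset (ZMod n)}
    (hI : CyclicallySparse I) : 2 * #I ≤ n := by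
  have hdisj : Disjoint I (I.map (addRightEmbedding 1)) := by
    simp only [disjoint_left, mem_map, addRightEmbedding_apply, not_exists, not_and]
    rintro i hi j hj rfl
    exact hI j hj hi
  calc 2 * #I = #(I ∪ I.map (addRightEmbedding 1)) := by
        rw [card_union_of_disjoint hdisj, card_map, two_mul]
    _ ≤ n := (card_le_univ _).trans (ZMod.card n).le

theorem sum_neg_one_pow_mul_sparseSum (n : ℕ) [NeZero n] (c : ZMod n → ℂ) :
    ∑ k ∈ range (n / 2 + 1), (-1 : ℂ) ^ k * sparseSum n c k =
      ∑ I : Finset (ZMod n) with CyclicallySparse I, (-1) ^ #I * ∏ i ∈ I, c i := by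
  rw [← sum_fiberwise_of_maps_to (g := card) (t := range (n / 2 + 1))]
  · refine sum_congr rfl fun k _ => ?_
    rw [sparseSum, mul_sum, filter_filter]
    exact sum_congr rfl fun I hI => by rw [(mem_filter.1 hI).2.2]
  · intro I hI
    have := (mem_filter.1 hI).2.two_mul_card_le
    rw [mem_range]
    omega

section Monodromy

variable {R : Type*} [CommRing R] {n : ℕ} [NeZero n]

theorem prod_monodromy_entries_indicator (c : ZMod n → R) (I : Finset (ZMod n)) :
    ∏ i, !![(0 : R), c i; -1, 1] (if i ∈ I then 0 else 1) (if i + 1 ∈ I then 0 else 1) =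
      if CyclicallySparse I then (-1) ^ #I * ∏ i ∈ I, c i else 0 := by
  split_ifs with hI
  · have hfactor : ∀ i, !![(0 : R), c i; -1, 1] (if i ∈ I then 0 else 1)
        (if i + 1 ∈ I then 0 else 1) =
        (if i ∈ I then c i else 1) * (if i + 1 ∈ I then -1 else 1) := by
      intro i
      by_cases hi : i ∈ I
      · simp [hi, hI i hi]
      · by_cases hi' : i + 1 ∈ I <;> simp [hi, hi']
    have hshift : ∏ i : ZMod n, (if i + 1 ∈ I then (-1 : R) else 1) =
        ∏ i : ZMod n, (if i ∈ I then (-1 : R) else 1) :=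
      Equiv.prod_comp (Equiv.addRight (1 : ZMod n)) fun i => if i ∈ I then (-1 : R) else 1
    rw [Fintype.prod_congr _ _ hfactor, prod_mul_distrib, hshift, Fintype.prod_ite_mem,
      Fintype.prod_ite_mem, prod_const, mul_comm]
  · obtain ⟨i, hi, hi'⟩ : ∃ i ∈ I, i + 1 ∈ I := by simpa [CyclicallySparse] using hI
    exact prod_eq_zero (mem_univ i) (by simp [hi, hi'])

theorem sum_prod_monodromy_entries (c : ZMod n → R) :
    ∑ s : ZMod n → Fin 2, ∏ i, !![(0 : R), c i; -1, 1] (s i) (s (i + 1)) =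
      ∑ I : Finset (ZMod n) with CyclicallySparse I, (-1) ^ #I * ∏ i ∈ I, c i := by
  rw [sum_filter]
  simp_rw [← prod_monodromy_entries_indicator]
  symm
  refine Fintype.sum_bijective (fun I i => if i ∈ I then 0 else 1) ?_ _ _ fun _ => rfl
  refine Function.bijective_iff_has_inverse.2 ⟨fun s => {i | s i = 0}, fun I => ?_, fun s => ?_⟩
  · ext i
    by_cases hi : i ∈ I <;> simp [hi]
  · funext i
    by_cases hs : s i = 0
    · simp [hs]
    · simp [Fin.eq_one_of_ne_zero _ hs]

end Monodromy

theorem trace_sq_div_det_monodromy_general (n : ℕ) [NeZero n]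
    (c : ZMod n → ℂ) :
    (Matrix.trace ((List.ofFn fun i : Fin n =>
        !![(0 : ℂ), c ((i : ℕ) : ZMod n); -1, 1]).prod)) ^ 2 /
      ((List.ofFn fun i : Fin n =>
        !![(0 : ℂ), c ((i : ℕ) : ZMod n); -1, 1]).prod).det =
    (∏ i : ZMod n, c i)⁻¹ *
      (∑ k ∈ Finset.range (n / 2 + 1), (-1 : ℂ) ^ k * sparseSum n c k) ^ 2 := by
  -- `ZMod (n + 1)` is `Fin (n + 1)` by definition, which lets the `ZMod` lemmas apply as stated.
  obtain ⟨n, rfl⟩ := Nat.exists_eq_succ_of_ne_zero (NeZero.ne n)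
  have hcast : ∀ i : Fin (n + 1), ((i : ℕ) : ZMod (n + 1)) = i := Fin.cast_val_eq_self
  simp_rw [hcast]
  have htr : Matrix.trace (List.ofFn fun i : Fin (n + 1) => !![(0 : ℂ), c i; -1, 1]).prod =
      ∑ I : Finset (ZMod (n + 1)) with CyclicallySparse I, (-1) ^ #I * ∏ i ∈ I, c i :=
    (Matrix.trace_list_ofFn_prod _).trans (sum_prod_monodromy_entries c)
  have hdet : Matrix.det (List.ofFn fun i : Fin (n + 1) => !![(0 : ℂ), c i; -1, 1]).prod =
      ∏ i, c i := by
    rw [← Matrix.coe_detMonoidHom, map_list_prod, List.map_ofFn, List.prod_ofFn]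
    exact Fintype.prod_congr _ _ fun i => by simp [Matrix.det_fin_two_of]
  rw [htr, hdet, sum_neg_one_pow_mul_sparseSum, div_eq_inv_mul]

/-- **AFIT Theorem 1 / Theorem 2.5.** For the monodromy matrix
`M = [[0,c₁],[-1,1]] ⋯ [[0,cₙ],[-1,1]]` with all `cᵢ ≠ 0`,
`(tr M)² / det M = (1/(c₁⋯cₙ)) (Σ_{k=0}^{⌊n/2⌋} (-1)^k F_k(c))²`. -/
theorem trace_sq_div_det_monodromy (n : ℕ) [NeZero n] (hn : 1 ≤ n)
    (c : ZMod n → ℂ) (hc : ∀ i, c i ≠ 0) :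
    (Matrix.trace ((List.ofFn fun i : Fin n =>
        !![(0 : ℂ), c ((i : ℕ) : ZMod n); -1, 1]).prod)) ^ 2 /
      ((List.ofFn fun i : Fin n =>
        !![(0 : ℂ), c ((i : ℕ) : ZMod n); -1, 1]).prod).det =
    (∏ i : ZMod n, c i)⁻¹ *
      (∑ k ∈ Finset.range (n / 2 + 1), (-1 : ℂ) ^ k * sparseSum n c k) ^ 2 :=
  trace_sq_div_det_monodromy_general n c
end

section
/- Let p, q, r, r', q', p' be complex numbers with q ≠ r, r' ≠ q', p' ≠ p, q ≠ q', r ≠ r'. Suppose that cr(p, q, q', p') = cr(q, r, r', q') and that cr(q, r, r', q') ≠ 0. Then mr(p, q, r, r', q', p') = −1, where mr(a₁,a₂,a₃,a₄,a₅,a₆) = ((a₁−a₂)(a₃−a₄)(a₅−a₆))/((a₂−a₃)(a₄−a₅)(a₆−a₁)) and cr(a,b,c,d) = ((a−b)(c−d))/((b−c)(d−a)). -/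
/-- The cross-ratio of four complex numbers. -/
noncomputable def crossRatio (a b c d : ℂ) : ℂ := ((a - b) * (c - d)) / ((b - c) * (d - a))

/-- The multi-ratio of six complex numbers. -/
noncomputable def multiRatio6 (a₁ a₂ a₃ a₄ a₅ a₆ : ℂ) : ℂ :=
  ((a₁ - a₂) * (a₃ - a₄) * (a₅ - a₆)) / ((a₂ - a₃) * (a₄ - a₅) * (a₆ - a₁))

theorem multiRatio6_mul_crossRatio {p q r r' q' p' : ℂ} (hqr : q ≠ r) (hrq : r' ≠ q')
    (hrr : r ≠ r') :
    multiRatio6 p q r r' q' p' * crossRatio q r r' q' = -crossRatio p q q' p' := by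
  set K := (q - r) * (r' - q') * (r - r')
  have hK : K ≠ 0 := by simp [K, sub_ne_zero, *]
  calc multiRatio6 p q r r' q' p' * crossRatio q r r' q'
      = ((p - q) * (q' - p') * K) / -((q - q') * (p' - p) * K) := by
        unfold multiRatio6 crossRatio
        rw [div_mul_div_comm]
        congr 1 <;> ring
    _ = -crossRatio p q q' p' := by
        rw [div_neg, mul_div_mul_right _ _ hK, crossRatio]

theorem multiRatio_eq_neg_one_general (p q r r' q' p' : ℂ)
    (h₁ : q ≠ r) (h₂ : r' ≠ q') (h₅ : r ≠ r')
    (hcr : crossRatio p q q' p' = crossRatio q r r' q')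
    (hne : crossRatio q r r' q' ≠ 0) :
    multiRatio6 p q r r' q' p' = -1 := by
  apply mul_right_cancel₀ hne
  rw [multiRatio6_mul_crossRatio h₁ h₂ h₅, hcr, neg_one_mul]

/-- **Lemma 8.1.** If `cr(p, q, q', p') = cr(q, r, r', q') ≠ 0`, then
`mr(p, q, r, r', q', p') = -1`. -/
theorem multiRatio_eq_neg_one (p q r r' q' p' : ℂ)
    (h₁ : q ≠ r) (h₂ : r' ≠ q') (h₃ : p' ≠ p) (h₄ : q ≠ q') (h₅ : r ≠ r')
    (hcr : crossRatio p q q' p' = crossRatio q r r' q')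
    (hne : crossRatio q r r' q' ≠ 0) :
    multiRatio6 p q r r' q' p' = -1 :=
  multiRatio_eq_neg_one_general p q r r' q' p' h₁ h₂ h₅ hcr hne
end

section
/- Let p₋, p, p₊, p₊₊, s, t be complex numbers (representing the curve points p_{i−1}, p_i, p_{i+1}, p_{i+2} and q_i, q_{i+1}) such that all the following cross-ratios are well defined, i.e. s ≠ p₊, t ≠ p, p₊ ≠ s, p₋ ≠ p, p₊₊ ≠ p₊, p ≠ p₊₊, p₋ ≠ p₊, and p₊ ≠ p₋ (all denominators occurring below are nonzero). Define α = cr(p, s, p₊, t), u = −cr(p, p₊, s, p₋), u' = −cr(p₊, p₊₊, t, p), and c = cr(p₋, p, p₊₊, p₊), where cr(a,b,c,d) = ((a−b)(c−d))/((b−c)(d−a)). Then c·(1+u)·(1+u') = α·u'. -/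
theorem one_sub_crossRatio {a b c d : ℂ} (hbc : b ≠ c) (hda : d ≠ a) :
    1 - crossRatio a b c d = crossRatio a c b d := by
  have : c - b ≠ 0 := sub_ne_zero.mpr hbc.symm
  unfold crossRatio
  field_simp
  ring

theorem c_from_u_relation_general (pm p pp ppp s t : ℂ)
    (h₂ : t ≠ p) (h₃ : pp ≠ s) (h₄ : pm ≠ p)
    (h₆ : p ≠ ppp) (h₈ : pp ≠ pm)
    (h₉ : ppp ≠ t) (h₁₀ : p ≠ pp) :
    crossRatio pm p ppp pp * (1 + (- crossRatio p pp s pm)) *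
        (1 + (- crossRatio pp ppp t p)) =
      crossRatio p s pp t * (- crossRatio pp ppp t p) := by
  rw [← sub_eq_add_neg, ← sub_eq_add_neg, one_sub_crossRatio h₃ h₄, one_sub_crossRatio h₉ h₁₀]
  unfold crossRatio
  have : s - pp ≠ 0 := sub_ne_zero.mpr h₃.symm
  have : t - ppp ≠ 0 := sub_ne_zero.mpr h₉.symm
  field_simp
  ring

/-- **The relation defining the map `Λ_α`** (Section 2.3), in cross-multiplied
form: with `α = cr(p, s, p₊, t)`, `u = -cr(p, p₊, s, p₋)`,
`u' = -cr(p₊, p₊₊, t, p)` and `c = cr(p₋, p, p₊₊, p₊)`, one has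
`c (1+u)(1+u') = α u'`.  Here `pm = p₋`, `pp = p₊`, `ppp = p₊₊`,
`s = qᵢ`, `t = q_{i+1}`. -/
theorem c_from_u_relation (pm p pp ppp s t : ℂ)
    (h₁ : s ≠ pp) (h₂ : t ≠ p) (h₃ : pp ≠ s) (h₄ : pm ≠ p)
    (h₅ : ppp ≠ pp) (h₆ : p ≠ ppp) (h₇ : pm ≠ pp) (h₈ : pp ≠ pm)
    (h₉ : ppp ≠ t) (h₁₀ : p ≠ pp) :
    crossRatio pm p ppp pp * (1 + (- crossRatio p pp s pm)) *
        (1 + (- crossRatio pp ppp t p)) =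
      crossRatio p s pp t * (- crossRatio pp ppp t p) :=
  c_from_u_relation_general pm p pp ppp s t h₂ h₃ h₄ h₆ h₈ h₉ h₁₀
end
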